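/- For every m ≥ 1, the map sending a self-complementary score sequence (s_1, ..., s_{2m+1}) of length 2m+1 to its first m terms (s_1, ..., s_m) is a bijection onto the set of nondecreasing sequences (s_1 ≤ ... ≤ s_m) of nonnegative integers satisfying ∑_{i=1}^r s_i ≥ C(r,2) for all 1 ≤ r < m, s_m ≤ m, and m·s_m ≥ ∑_{i=1}^m s_i ≥ C(m,2). -/

import Mathlib

/-- A score sequence of length `n`: nondecreasing, partial sums `≥ C(r,2)` for `1 ≤ r < n`,
and total sum `C(n,2)`. -/
def IsScoreSeq (l : List ℕ) : Prop :=
  l.Pairwise (· ≤ ·) ∧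
  (∀ r, 1 ≤ r → r < l.length → r.choose 2 ≤ (l.take r).sum) ∧
  l.sum = l.length.choose 2

/-- A sequence of length `n` is self-complementary if `s_{n+1-i} = n-1-s_i`
for all `1 ≤ i ≤ ⌊n/2⌋` (here `l.getD (i-1) 0` is the `i`-th term `s_i`). -/
def IsSelfCompl (l : List ℕ) : Prop :=
  ∀ i, 1 ≤ i → i ≤ l.length / 2 →
    ((l.getD (l.length - i) 0 : ℤ)) = (l.length : ℤ) - 1 - (l.getD (i - 1) 0 : ℤ)

/-! A self-complementary sequence of length `2m + 1` is its first `m` terms `t`, a middle term,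
and the complements `2m - s_m, …, 2m - s_1`; the total sum `C(2m+1, 2)` then forces the middle
term to be `m`. So the inverse map extends `t` to `t ++ m :: reverse (2m - t)`, which is
nondecreasing exactly when `t` is and every term of `t` is at most `m`. For `r + k = 2m + 1` the
excess `∑_{i ≤ r} s_i - C(r, 2)` of the extension equals the excess of the first `k` terms of `t`,
so the score inequalities past position `m` reduce to those of `t`. -/
lemma choose_two_add (a b : ℕ) : (a + b).choose 2 = a.choose 2 + b.choose 2 + a * b := by
  induction b with
  | zero => simp
  | succ b ih =>
    rw [← add_assoc, Nat.choose_succ_succ', ih, Nat.choose_one_right, Nat.choose_succ_succ',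
      Nat.choose_one_right]
    ring

lemma two_mul_choose_two_add_self (n : ℕ) : 2 * n.choose 2 + n = n * n := by
  induction n with
  | zero => rfl
  | succ n ih => rw [Nat.choose_succ_succ', Nat.choose_one_right]; linarith

lemma List.getD_le_of_forall_le {l : List ℕ} {n d c : ℕ} (h : ∀ x ∈ l, x ≤ c) (hd : d ≤ c) :
    l.getD n d ≤ c := by
  rw [List.getD_eq_getElem?_getD]
  cases hx : l[n]? with
  | none => exact hd
  | some x => exact h x (List.mem_of_getElem? hx)

lemma List.Pairwise.le_getD_length_sub_one {α : Type*} [Preorder α] {l : List α}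
    (h : l.Pairwise (· ≤ ·)) {x : α} (hx : x ∈ l) (d : α) : x ≤ l.getD (l.length - 1) d := by
  rw [List.getD_eq_getElem _ _ (Nat.sub_one_lt (List.length_pos_of_mem hx).ne'),
    ← List.getLast_eq_getElem (List.ne_nil_of_mem hx)]
  exact h.rel_getLast hx

lemma List.Pairwise.sum_le_length_mul {l : List ℕ} (h : l.Pairwise (· ≤ ·)) :
    l.sum ≤ l.length * l.getD (l.length - 1) 0 :=
  l.sum_le_card_nsmul _ fun _ hx => h.le_getD_length_sub_one hx 0

lemma List.sum_map_tsub_add_sum {c : ℕ} {t : List ℕ} (h : ∀ x ∈ t, x ≤ c) :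
    (t.map (c - ·)).sum + t.sum = c * t.length := by
  induction t with
  | nil => simp
  | cons a t ih =>
    simp only [List.mem_cons, forall_eq_or_imp] at h
    simp only [List.map_cons, List.sum_cons, List.length_cons, Nat.mul_succ, ← ih h.2]
    omega

lemma IsScoreSeq.choose_two_le_sum_take {l : List ℕ} (h : IsScoreSeq l) {r : ℕ}
    (hr : r ≤ l.length) : r.choose 2 ≤ (l.take r).sum := by
  obtain rfl | hr0 := Nat.eq_zero_or_pos r
  · simp
  obtain rfl | hrl := hr.eq_or_lt
  · rw [List.take_length, h.2.2]
  · exact h.2.1 r hr0 hrl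

lemma isSelfCompl_iff_drop_eq {l : List ℕ} {m : ℕ} (hlen : l.length = 2 * m + 1) :
    IsSelfCompl l ↔
      (∀ x ∈ l.take m, x ≤ 2 * m) ∧ l.drop (m + 1) = ((l.take m).map (2 * m - ·)).reverse := by
  have hpairs : IsSelfCompl l ↔
      ∀ j < m, l.getD j 0 ≤ 2 * m ∧ l.getD (2 * m - j) 0 = 2 * m - l.getD j 0 := by
    simp only [IsSelfCompl, hlen, show (2 * m + 1) / 2 = m by omega]
    refine ⟨fun h j hj => ?_, fun h i hi him => ?_⟩
    · have := h (j + 1) (by omega) hj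
      rw [show 2 * m + 1 - (j + 1) = 2 * m - j by omega, Nat.add_sub_cancel] at this
      push_cast at this
      omega
    · have := h (i - 1) (by omega)
      rw [show 2 * m - (i - 1) = 2 * m + 1 - i by omega] at this
      push_cast
      omega
  have hrev : (l.drop (m + 1)).reverse = l.reverse.take m := by
    rw [List.take_reverse, hlen, show 2 * m + 1 - m = m + 1 by omega]
  rw [hpairs, ← List.reverse_inj, List.reverse_reverse, hrev, List.ext_getElem_iff,
    List.forall_mem_iff_getElem]
  have hget : ∀ j (hj : j < m), l[j]?.getD 0 = l[j]'(by omega) := fun j hj => by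
    rw [List.getElem?_eq_getElem (by omega), Option.getD_some]
  simp +contextual only [List.getD_eq_getElem?_getD, hget, hlen, Order.lt_add_one_iff,
    tsub_le_iff_right, le_add_iff_nonneg_right, zero_le, getElem?_pos, Option.getD_some,
    List.length_take, lt_inf_iff, List.getElem_take, forall_and_index, List.length_reverse,
    List.map_take, List.length_map, and_self, List.getElem_reverse, add_tsub_cancel_right,
    List.getElem_map, forall_true_left, true_and]
  exact ⟨fun h => ⟨fun j hj _ => (h j hj).1, fun j hj _ => (h j hj).2⟩,
    fun h j hj => ⟨h.1 j hj (by omega), h.2 j hj (by omega)⟩⟩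

def selfComplExtend (t : List ℕ) : List ℕ :=
  t ++ t.length :: (t.map (2 * t.length - ·)).reverse

section selfComplExtend

variable {t : List ℕ}

lemma length_selfComplExtend : (selfComplExtend t).length = 2 * t.length + 1 := by
  simp only [selfComplExtend, List.length_append, List.length_cons, List.length_reverse,
    List.length_map]
  ring

lemma take_selfComplExtend_of_le {r : ℕ} (hr : r ≤ t.length) :
    (selfComplExtend t).take r = t.take r :=
  List.take_append_of_le_length hr

lemma take_length_selfComplExtend : (selfComplExtend t).take t.length = t := by
  rw [take_selfComplExtend_of_le le_rfl, List.take_length]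

lemma drop_selfComplExtend :
    (selfComplExtend t).drop (t.length + 1) = (t.map (2 * t.length - ·)).reverse := by
  simp [selfComplExtend, List.drop_append]

lemma pairwise_selfComplExtend_iff :
    (selfComplExtend t).Pairwise (· ≤ ·) ↔ t.Pairwise (· ≤ ·) ∧ ∀ x ∈ t, x ≤ t.length := by
  simp only [selfComplExtend, List.pairwise_append, List.pairwise_cons, List.pairwise_reverse,
    List.pairwise_map, List.mem_cons, List.mem_reverse, List.mem_map]
  constructor
  · rintro ⟨ht, -, hcross⟩
    exact ⟨ht, fun x hx => hcross x hx _ (Or.inl rfl)⟩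
  · rintro ⟨ht, hle⟩
    refine ⟨ht, ⟨?_, ht.imp (by omega)⟩, ?_⟩
    · rintro _ ⟨x, hx, rfl⟩
      have := hle x hx
      omega
    · rintro a ha _ (rfl | ⟨x, hx, rfl⟩)
      · exact hle a ha
      · have := hle x hx
        have := hle a ha
        omega

lemma sum_selfComplExtend (h : ∀ x ∈ t, x ≤ 2 * t.length) :
    (selfComplExtend t).sum = (2 * t.length + 1).choose 2 := by
  have hc := two_mul_choose_two_add_self (2 * t.length + 1)
  have hs := List.sum_map_tsub_add_sum h
  simp only [selfComplExtend, List.sum_append, List.sum_cons, List.sum_reverse]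
  nlinarith

lemma sum_drop_selfComplExtend_add_sum_take (h : ∀ x ∈ t, x ≤ 2 * t.length) {k : ℕ}
    (hk : k ≤ t.length) :
    ((selfComplExtend t).drop (2 * t.length + 1 - k)).sum + (t.take k).sum = 2 * t.length * k := by
  have hdrop : (selfComplExtend t).drop (2 * t.length + 1 - k)
      = ((t.take k).map (2 * t.length - ·)).reverse := by
    rw [show 2 * t.length + 1 - k = (t.length + 1) + (t.length - k) by omega, ← List.drop_drop,
      drop_selfComplExtend, List.drop_reverse, List.length_map, List.map_take,
      Nat.sub_sub_self hk]
  rw [hdrop, List.sum_reverse, List.sum_map_tsub_add_sum fun x hx => h x (List.mem_of_mem_take hx),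
    List.length_take, min_eq_left hk]

lemma sum_take_selfComplExtend_add_choose_two (h : ∀ x ∈ t, x ≤ 2 * t.length) {r k : ℕ}
    (hk : k ≤ t.length) (hrk : r + k = 2 * t.length + 1) :
    ((selfComplExtend t).take r).sum + k.choose 2 = r.choose 2 + (t.take k).sum := by
  have hsplit := List.sum_take_add_sum_drop (selfComplExtend t) r
  rw [sum_selfComplExtend h, ← hrk, choose_two_add] at hsplit
  have hdrop := sum_drop_selfComplExtend_add_sum_take h hk
  rw [show 2 * t.length + 1 - k = r by omega] at hdrop
  have hk2 := two_mul_choose_two_add_self k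
  have hmk : 2 * t.length * k + k = r * k + k * k := by
    rw [← add_one_mul, ← hrk]; ring
  linarith

lemma isScoreSeq_selfComplExtend (hsort : t.Pairwise (· ≤ ·)) (hle : ∀ x ∈ t, x ≤ t.length)
    (hprefix : ∀ r ≤ t.length, r.choose 2 ≤ (t.take r).sum) : IsScoreSeq (selfComplExtend t) := by
  have h2m : ∀ x ∈ t, x ≤ 2 * t.length := fun x hx => (hle x hx).trans (by omega)
  refine ⟨pairwise_selfComplExtend_iff.2 ⟨hsort, hle⟩, fun r _ hr => ?_, ?_⟩
  · rw [length_selfComplExtend] at hr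
    rcases le_or_gt r t.length with hrm | hrm
    · rw [take_selfComplExtend_of_le hrm]
      exact hprefix r hrm
    · have := sum_take_selfComplExtend_add_choose_two h2m (r := r)
        (k := 2 * t.length + 1 - r) (by omega) (by omega)
      have := hprefix (2 * t.length + 1 - r) (by omega)
      omega
  · rw [length_selfComplExtend, sum_selfComplExtend h2m]

lemma isSelfCompl_selfComplExtend (h : ∀ x ∈ t, x ≤ 2 * t.length) :
    IsSelfCompl (selfComplExtend t) := by
  rw [isSelfCompl_iff_drop_eq length_selfComplExtend, take_length_selfComplExtend,
    drop_selfComplExtend]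
  exact ⟨h, rfl⟩

end selfComplExtend

lemma eq_selfComplExtend_take {l : List ℕ} {m : ℕ} (hlen : l.length = 2 * m + 1)
    (hsc : IsScoreSeq l) (hcomp : IsSelfCompl l) : l = selfComplExtend (l.take m) := by
  obtain ⟨hle, hdrop⟩ := (isSelfCompl_iff_drop_eq hlen).1 hcomp
  have ht : (l.take m).length = m := by rw [List.length_take, hlen]; omega
  have hmid : l[m] = m := by
    have hsum : (l.take m).sum + (l[m] + (l.drop (m + 1)).sum) = (2 * m + 1).choose 2 := by
      rw [← List.sum_cons, ← List.drop_eq_getElem_cons, List.sum_take_add_sum_drop, hsc.2.2, hlen]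
    have hcompl := List.sum_map_tsub_add_sum hle
    rw [hdrop, List.sum_reverse] at hsum
    rw [ht] at hcompl
    have hc := two_mul_choose_two_add_self (2 * m + 1)
    nlinarith
  calc l = l.take m ++ l[m] :: l.drop (m + 1) := by
        rw [← List.drop_eq_getElem_cons, List.take_append_drop]
    _ = selfComplExtend (l.take m) := by rw [hmid, hdrop, selfComplExtend, ht]

theorem selfcompl_odd_half_bijection_general (m : ℕ) :
    Set.BijOn (fun l : List ℕ => l.take m)
      {l : List ℕ | l.length = 2 * m + 1 ∧ IsScoreSeq l ∧ IsSelfCompl l}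
      {l : List ℕ | l.length = m ∧ l.Pairwise (· ≤ ·) ∧
        (∀ r, 1 ≤ r → r < m → r.choose 2 ≤ (l.take r).sum) ∧
        l.getD (m - 1) 0 ≤ m ∧
        m.choose 2 ≤ l.sum ∧ l.sum ≤ m * l.getD (m - 1) 0} := by
  refine ⟨?_, ?_, ?_⟩
  · rintro l ⟨hlen, hsc, hcomp⟩
    have ht : (l.take m).length = m := by rw [List.length_take, hlen]; omega
    obtain ⟨hsort, hle⟩ :=
      pairwise_selfComplExtend_iff.1 (eq_selfComplExtend_take hlen hsc hcomp ▸ hsc.1)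
    rw [ht] at hle
    refine ⟨ht, hsort, fun r _ hr => ?_, List.getD_le_of_forall_le hle m.zero_le,
      hsc.choose_two_le_sum_take (by omega), by simpa only [ht] using hsort.sum_le_length_mul⟩
    rw [List.take_take, min_eq_left hr.le]
    exact hsc.choose_two_le_sum_take (by omega)
  · rintro l₁ ⟨hlen₁, hsc₁, hcomp₁⟩ l₂ ⟨hlen₂, hsc₂, hcomp₂⟩ (heq : l₁.take m = l₂.take m)
    rw [eq_selfComplExtend_take hlen₁ hsc₁ hcomp₁, eq_selfComplExtend_take hlen₂ hsc₂ hcomp₂, heq]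
  · rintro t ⟨rfl, hsort, hprefix, hlast, hsum, -⟩
    have hle : ∀ x ∈ t, x ≤ t.length := fun x hx => (hsort.le_getD_length_sub_one hx 0).trans hlast
    refine ⟨selfComplExtend t, ⟨length_selfComplExtend, isScoreSeq_selfComplExtend hsort hle ?_,
      isSelfCompl_selfComplExtend fun x hx => (hle x hx).trans (by omega)⟩,
      take_length_selfComplExtend⟩
    intro r hr
    obtain rfl | hr0 := Nat.eq_zero_or_pos r
    · simp
    obtain rfl | hrt := hr.eq_or_lt
    · rwa [List.take_length]
    · exact hprefix r hr0 hrt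

/-- For `m ≥ 1`, taking the first `m` terms is a bijection from the set of
self-complementary score sequences of length `2m+1` onto the set of nondecreasing
sequences `(s_1 ≤ ⋯ ≤ s_m)` of nonnegative integers with `∑_{i=1}^r s_i ≥ C(r,2)` for
`1 ≤ r < m`, `s_m ≤ m`, and `m·s_m ≥ ∑_{i=1}^m s_i ≥ C(m,2)`. -/
theorem selfcompl_odd_half_bijection (m : ℕ) (hm : 1 ≤ m) :
    Set.BijOn (fun l : List ℕ => l.take m)
      {l : List ℕ | l.length = 2 * m + 1 ∧ IsScoreSeq l ∧ IsSelfCompl l}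
      {l : List ℕ | l.length = m ∧ l.Pairwise (· ≤ ·) ∧
        (∀ r, 1 ≤ r → r < m → r.choose 2 ≤ (l.take r).sum) ∧
        l.getD (m - 1) 0 ≤ m ∧
        m.choose 2 ≤ l.sum ∧ l.sum ≤ m * l.getD (m - 1) 0} :=
  selfcompl_odd_half_bijection_general m
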